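/- On R^4 with the Poisson brackets of A_{4,12} (P and P' as given: P^{13}=-p14 e^{x3} sin x4, P^{14}=p14 e^{x3} cos x4, P^{23}=-p14 e^{x3} cos x4, P^{24}=-p14 e^{x3} sin x4; P'^{13}=e^{x3}(-α cos x4+β sin x4), P'^{14}=-e^{x3}(β cos x4+α sin x4), P'^{23}=e^{x3}(β cos x4+α sin x4), P'^{24}=e^{x3}(-α cos x4+β sin x4), with α=a54 x3-a64 x4, β=a64 x3+a54 x4), assume p14 ≠ 0. Then H1 = (-2 a64 x3 - 2 a54 x4)/p14 and H2 = ((a64^2 - a54^2) x3^2 + 4 a54 a64 x3 x4 + (a54^2 - a64^2) x4^2)/p14^2 satisfy {H1,H2} = 0 and {H1,H2}' = 0. -/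

import Mathlib

open scoped BigOperators

noncomputable def pd {m : ℕ} (μ : Fin m) (f : (Fin m → ℝ) → ℝ) (x : Fin m → ℝ) : ℝ :=
  fderiv ℝ f x (Pi.single μ 1)

/-- Poisson bracket associated to a bivector field `P`. -/
noncomputable def pbrk {m : ℕ} (P : (Fin m → ℝ) → Fin m → Fin m → ℝ)
    (f g : (Fin m → ℝ) → ℝ) (x : Fin m → ℝ) : ℝ :=
  ∑ μ, ∑ ν, P x μ ν * pd μ f x * pd ν g x

/-- Schouten bracket `[P,P]^{λμν}`. -/
noncomputable def schouten {m : ℕ} (P : (Fin m → ℝ) → Fin m → Fin m → ℝ)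
    (l μ ν : Fin m) (x : Fin m → ℝ) : ℝ :=
  ∑ ρ, (P x ρ l * pd ρ (fun y => P y μ ν) x
      + P x ρ ν * pd ρ (fun y => P y l μ) x
      + P x ρ μ * pd ρ (fun y => P y ν l) x)

/-- Mixed Schouten bracket `[P,Q]^{λμν}`. -/
noncomputable def schoutenMixed {m : ℕ} (P Q : (Fin m → ℝ) → Fin m → Fin m → ℝ)
    (l μ ν : Fin m) (x : Fin m → ℝ) : ℝ :=
  ∑ ρ, (P x ρ l * pd ρ (fun y => Q y μ ν) x + Q x ρ l * pd ρ (fun y => P y μ ν) x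
      + P x ρ ν * pd ρ (fun y => Q y l μ) x + Q x ρ ν * pd ρ (fun y => P y l μ) x
      + P x ρ μ * pd ρ (fun y => Q y ν l) x + Q x ρ μ * pd ρ (fun y => P y ν l) x)

/-- The Poisson bivector `P` on the group `A_{4,12}`. -/
noncomputable def P412 (p14 : ℝ) : (Fin 4 → ℝ) → Fin 4 → Fin 4 → ℝ :=
  fun x μ ν =>
    let A := -(p14 * Real.exp (x 2) * Real.sin (x 3))
    let B := p14 * Real.exp (x 2) * Real.cos (x 3)
    let C := -(p14 * Real.exp (x 2) * Real.cos (x 3))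
    let D := -(p14 * Real.exp (x 2) * Real.sin (x 3))
    !![0, 0, A, B;
       0, 0, C, D;
       -A, -C, 0, 0;
       -B, -D, 0, 0] μ ν

/-- The Poisson bivector `P'` on the group `A_{4,12}`, with
`α = a54 x3 - a64 x4` and `β = a64 x3 + a54 x4`. -/
noncomputable def P412' (a54 a64 : ℝ) : (Fin 4 → ℝ) → Fin 4 → Fin 4 → ℝ :=
  fun x μ ν =>
    let α := a54 * x 2 - a64 * x 3
    let β := a64 * x 2 + a54 * x 3
    let A := Real.exp (x 2) * (-α * Real.cos (x 3) + β * Real.sin (x 3))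
    let B := -(Real.exp (x 2) * (β * Real.cos (x 3) + α * Real.sin (x 3)))
    let C := Real.exp (x 2) * (β * Real.cos (x 3) + α * Real.sin (x 3))
    let D := Real.exp (x 2) * (-α * Real.cos (x 3) + β * Real.sin (x 3))
    !![0, 0, A, B;
       0, 0, C, D;
       -A, -C, 0, 0;
       -B, -D, 0, 0] μ ν

/-! Both Hamiltonians depend only on `x₃, x₄`, and both bivectors vanish on the `(x₃, x₄)`-block,
so every term of either bracket has a vanishing factor. -/

theorem pd_eq_zero_of_dependsOn {m : ℕ} {f : (Fin m → ℝ) → ℝ} {S : Set (Fin m)}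
    (hf : DependsOn f S) {μ : Fin m} (hμ : μ ∉ S) (x : Fin m → ℝ) : pd μ f x = 0 := by
  by_cases hd : DifferentiableAt ℝ f x
  · have hconst : (fun t : ℝ => f (x + t • Pi.single μ 1)) = fun _ => f x := by
      funext t
      refine hf fun i hi => ?_
      have hiμ : i ≠ μ := fun h => hμ (h ▸ hi)
      simp [hiμ]
    rw [pd, ← hd.lineDeriv_eq_fderiv, lineDeriv, hconst, deriv_const]
  · rw [pd, fderiv_zero_of_not_differentiableAt hd, zero_apply]

theorem pbrk_eq_zero_of_dependsOn {m : ℕ} {P : (Fin m → ℝ) → Fin m → Fin m → ℝ}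
    {f g : (Fin m → ℝ) → ℝ} {S : Set (Fin m)}
    (hP : ∀ x, ∀ μ ∈ S, ∀ ν ∈ S, P x μ ν = 0) (hf : DependsOn f S) (hg : DependsOn g S)
    (x : Fin m → ℝ) : pbrk P f g x = 0 := by
  refine Finset.sum_eq_zero fun μ _ => Finset.sum_eq_zero fun ν _ => ?_
  by_cases hμ : μ ∈ S
  · by_cases hν : ν ∈ S
    · rw [hP x μ hμ ν hν, zero_mul, zero_mul]
    · rw [pd_eq_zero_of_dependsOn hg hν, mul_zero]
  · rw [pd_eq_zero_of_dependsOn hf hμ, mul_zero, zero_mul]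

theorem dependsOn_of_two_coords {m : ℕ} (h : ℝ → ℝ → ℝ) (i j : Fin m) :
    DependsOn (fun x : Fin m → ℝ => h (x i) (x j)) {i, j} := fun x y hxy => by
  simp only [Set.mem_insert_iff, Set.mem_singleton_iff, forall_eq_or_imp, forall_eq] at hxy
  simp only [hxy.1, hxy.2]

theorem P412_eq_zero (p14 : ℝ) : ∀ x, ∀ μ ∈ ({2, 3} : Set (Fin 4)), ∀ ν ∈ ({2, 3} : Set (Fin 4)),
    P412 p14 x μ ν = 0 := by
  rintro x μ (rfl | rfl) ν (rfl | rfl) <;> simp [P412]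

theorem P412'_eq_zero (a54 a64 : ℝ) : ∀ x, ∀ μ ∈ ({2, 3} : Set (Fin 4)),
    ∀ ν ∈ ({2, 3} : Set (Fin 4)), P412' a54 a64 x μ ν = 0 := by
  rintro x μ (rfl | rfl) ν (rfl | rfl) <;> simp [P412']

theorem A412_bi_involution_general (p14 a54 a64 : ℝ) :
    let H1 : (Fin 4 → ℝ) → ℝ := fun x => (-2 * a64 * x 2 - 2 * a54 * x 3) / p14
    let H2 : (Fin 4 → ℝ) → ℝ := fun x =>
      ((a64 ^ 2 - a54 ^ 2) * (x 2) ^ 2 + 4 * a54 * a64 * x 2 * x 3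
        + (a54 ^ 2 - a64 ^ 2) * (x 3) ^ 2) / p14 ^ 2
    (∀ x, pbrk (P412 p14) H1 H2 x = 0) ∧
    (∀ x, pbrk (P412' a54 a64) H1 H2 x = 0) := by
  intro H1 H2
  have hH1 : DependsOn H1 {2, 3} :=
    dependsOn_of_two_coords (fun s t => (-2 * a64 * s - 2 * a54 * t) / p14) 2 3
  have hH2 : DependsOn H2 {2, 3} :=
    dependsOn_of_two_coords (fun s t => ((a64 ^ 2 - a54 ^ 2) * s ^ 2 + 4 * a54 * a64 * s * t
        + (a54 ^ 2 - a64 ^ 2) * t ^ 2) / p14 ^ 2) 2 3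
  exact ⟨pbrk_eq_zero_of_dependsOn (P412_eq_zero p14) hH1 hH2,
    pbrk_eq_zero_of_dependsOn (P412'_eq_zero a54 a64) hH1 hH2⟩

theorem A412_bi_involution (p14 a54 a64 : ℝ) (hne : p14 ≠ 0) :
    let H1 : (Fin 4 → ℝ) → ℝ := fun x => (-2 * a64 * x 2 - 2 * a54 * x 3) / p14
    let H2 : (Fin 4 → ℝ) → ℝ := fun x =>
      ((a64 ^ 2 - a54 ^ 2) * (x 2) ^ 2 + 4 * a54 * a64 * x 2 * x 3
        + (a54 ^ 2 - a64 ^ 2) * (x 3) ^ 2) / p14 ^ 2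
    (∀ x, pbrk (P412 p14) H1 H2 x = 0) ∧
    (∀ x, pbrk (P412' a54 a64) H1 H2 x = 0) :=
  A412_bi_involution_general p14 a54 a64
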